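/- Let q ≡ 1 (mod 6) be a prime power, M = 3 and N = (q²+q+1)/3. For u ∈ W_Q with u mod N ∈ 2^{-1}I_1, with ℓ_u and g_3(ω^u) as defined, one has η(g_3(ω^u)) = 1 if q ≡ 1 (mod 12), and η(g_3(ω^u)) = −1 if q ≡ 7 (mod 12), where η is the quadratic character of F_{q³}. -/

import Mathlib

open scoped Classical Pointwise

/-- The canonical additive character of a finite field `F` of characteristic `p`:
`ψ(x) = exp(2πi·Tr_{F/F_p}(x)/p)`. -/
noncomputable def canonPsi (p : ℕ) (F : Type) [Field F] [Algebra (ZMod p) F] : F → ℂ :=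
  fun x => Complex.exp (2 * Real.pi * Complex.I *
    ((Algebra.trace (ZMod p) F x).val : ℂ) / (p : ℂ))

/-- The cyclotomic class `C_i^{(N,Q)} = ω^i · ⟨ω^N⟩`. -/
def cycClass {F : Type} [Field F] (ω : F) (N i : ℕ) : Set F :=
  {x | ∃ k : ℕ, x = ω ^ i * (ω ^ N) ^ k}

/-- `ψ(D) = Σ_{x ∈ D} ψ(x)` for a subset `D` of a finite field. -/
noncomputable def psiSum {F : Type} [Field F] [Fintype F] (ψ : F → ℂ) (S : Set F) : ℂ :=
  ∑ x ∈ S.toFinset, ψ x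

/-- `W_Q := {i mod q²+q+1 : Tr_{q³/q}(ω^{2i}) = 0}`. -/
def WQ (q : ℕ) (K : Type) {F : Type} [Field K] [Field F] [Algebra K F] (ω : F) :
    Set (ZMod (q ^ 2 + q + 1)) :=
  {i | Algebra.trace K F (ω ^ (2 * i.val)) = 0}

/-! Write `x = ω^{2u}` and `c = ω^{ℓN}`, so that `ξ = c^{q-1}` is a primitive cube root of
unity lying in `F_q`. The two conditions `Tr(x) = 0` and `Tr(x c²) = 0` form a linear system in
`x, x^q, x^{q²}` whose only solutions satisfy `x = ξ x^q`; hence `x c` lies in `F_q`,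
`Tr(x c) = 3 x c`, and `g₃(ω^u) = 3 (ω^{u+ℓN})²`. Thus `η(g₃(ω^u)) = η(3)`, and by quadratic
reciprocity `3` is a square in `F_{q³}` exactly when `q³ ≡ ±1 (mod 12)`, i.e. when
`q ≡ 1 (mod 12)`. -/

namespace MulChar

theorem apply_eq_one_of_isSquare {M R : Type*} [CommMonoidWithZero M] [CommRing R]
    {η : MulChar M R} (hη : η ^ 2 = 1) {a : M} (ha : IsSquare a) (hau : IsUnit a) : η a = 1 := by
  obtain ⟨b, rfl⟩ := ha
  rw [map_mul, ← sq, ← pow_apply' η two_ne_zero, hη, one_apply (isUnit_of_mul_isUnit_left hau)]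

theorem apply_eq_neg_one_of_not_isSquare {F R : Type*} [Field F] [Finite F] [CommRing R]
    [NoZeroDivisors R] {η : MulChar F R} (hη : orderOf η = 2) {a : F} (ha : ¬IsSquare a) :
    η a = -1 := by
  have hη2 : η ^ 2 = 1 := hη ▸ pow_orderOf_eq_one η
  have ha0 : a ≠ 0 := by rintro rfl; exact ha ⟨0, (mul_zero 0).symm⟩
  have hsq : η a * η a = 1 := by
    rw [← map_mul]; exact apply_eq_one_of_isSquare hη2 ⟨a, rfl⟩ (by simpa using ha0)
  refine (mul_self_eq_one_iff.mp hsq).resolve_left fun h1 => ?_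
  obtain ⟨g, hg⟩ := IsCyclic.exists_generator (α := Fˣ)
  obtain ⟨k, hk⟩ : ∃ k : ℕ, g ^ k = Units.mk0 a ha0 := mem_powers_iff_mem_zpowers.mpr (hg _)
  -- `a = g ^ k` with `k` odd, so `η g = η a = 1` and `η` is trivial
  have hk_odd : Odd k := by
    refine Nat.not_even_iff_odd.mp fun ⟨m, hm⟩ => ha ⟨(g : F) ^ m, ?_⟩
    rw [← pow_add, ← hm, ← Units.val_pow_eq_pow_val, hk, Units.val_mk0]
  have hg1 : η g = 1 := by
    obtain ⟨m, rfl⟩ := hk_odd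
    have hgg : η g * η g = 1 := by
      rw [← map_mul]; exact apply_eq_one_of_isSquare hη2 ⟨_, rfl⟩ (by simp)
    rw [← h1, ← Units.val_mk0 ha0, ← hk, Units.val_pow_eq_pow_val, map_pow, pow_succ, pow_mul,
      sq, hgg, one_pow, one_mul]
  have : η = 1 := eq_one_iff.mpr fun b => by
    obtain ⟨j, rfl⟩ : ∃ j : ℕ, g ^ j = b := mem_powers_iff_mem_zpowers.mpr (hg b)
    rw [Units.val_pow_eq_pow_val, map_pow, hg1, one_pow]
  simp [this] at hη

end MulChar

theorem ringChar_ne_of_not_dvd_card {R : Type*} [CommRing R] [Fintype R] {p : ℕ} [Fact p.Prime]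
    (h : ¬p ∣ Fintype.card R) : ringChar R ≠ p :=
  fun hp => h ((prime_dvd_char_iff_dvd_card p).mp (hp ▸ dvd_rfl))

theorem isUnit_natCast_of_not_dvd_card {R : Type*} [CommRing R] [Fintype R] {p : ℕ}
    [Fact p.Prime] (h : ¬p ∣ Fintype.card R) : IsUnit (p : R) :=
  (isUnit_iff_not_dvd_char R p).mpr (mt (prime_dvd_char_iff_dvd_card p).mp h)

namespace FiniteField

theorem isSquare_three_iff {F : Type*} [Field F] [Fintype F] (hF2 : ringChar F ≠ 2)
    (hF3 : ringChar F ≠ 3) :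
    IsSquare (3 : F) ↔ Fintype.card F % 12 = 1 ∨ Fintype.card F % 12 = 11 := by
  rw [← Nat.cast_ofNat, isSquare_odd_prime_iff hF2 (by norm_num), ZMod.χ₄_nat_eq_if_mod_four,
    ← ZMod.natCast_mod (Fintype.card F) 3]
  set n := Fintype.card F
  have h2 : n % 2 = 1 := odd_card_of_char_ne_two hF2
  have h3 : n % 3 ≠ 0 := fun h => hF3 <| Eq.symm <|
    (Nat.prime_dvd_prime_iff_eq Nat.prime_three (CharP.char_is_prime F _)).mp
      ((prime_dvd_char_iff_dvd_card 3).mpr (Nat.dvd_of_mod_eq_zero h))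
  obtain h | h | h | h : n % 12 = 1 ∨ n % 12 = 5 ∨ n % 12 = 7 ∨ n % 12 = 11 := by omega
  all_goals
    rw [h2, show n % 4 = n % 12 % 4 by omega, show n % 3 = n % 12 % 3 by omega, h]
    decide

theorem ne_zero_of_forall_exists_pow_eq {F : Type*} [Field F] (hF : ringChar F ≠ 2) {ω : F}
    (hω : ∀ x : F, x ≠ 0 → ∃ k : ℕ, ω ^ k = x) : ω ≠ 0 := by
  rintro rfl
  obtain ⟨k, hk⟩ := hω (-1) (neg_ne_zero.mpr one_ne_zero)
  rcases k.eq_zero_or_pos with rfl | hk0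
  · exact hF (neg_one_eq_one_iff.mp (hk.symm.trans (pow_zero 0)))
  · exact one_ne_zero (neg_eq_zero.mp (hk.symm.trans (zero_pow hk0.ne')))

theorem orderOf_eq_card_sub_one_of_forall_exists_pow_eq {F : Type*} [Field F] [Fintype F]
    {ω : F} (hω0 : ω ≠ 0) (hω : ∀ x : F, x ≠ 0 → ∃ k : ℕ, ω ^ k = x) :
    orderOf ω = Fintype.card F - 1 := by
  rw [← Fintype.card_units, ← Nat.card_eq_fintype_card, ← Units.val_mk0 hω0, orderOf_units]
  refine orderOf_eq_card_of_forall_mem_zpowers fun x => ?_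
  obtain ⟨k, hk⟩ := hω x x.ne_zero
  exact mem_powers_iff_mem_zpowers.mp ⟨k, Units.ext (by simpa using hk)⟩

theorem finrank_eq_of_card_eq_pow {K F : Type*} [Field K] [Field F] [Fintype K] [Fintype F]
    [Algebra K F] {n : ℕ} (h : Fintype.card F = Fintype.card K ^ n) : Module.finrank K F = n :=
  Nat.pow_right_injective Fintype.one_lt_card (Module.card_eq_pow_finrank.symm.trans h)

variable {K F : Type*} [Field K] [Field F] [Fintype K] [Finite F] [Algebra K F] {q : ℕ}

theorem algebraMap_trace_eq_of_finrank_eq_three (hq : Fintype.card K = q)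
    (h3 : Module.finrank K F = 3) (x : F) :
    algebraMap K F (Algebra.trace K F x) = x + x ^ q + (x ^ q) ^ q := by
  rw [algebraMap_trace_eq_sum_pow, h3, Nat.card_eq_fintype_card, hq]
  simp [Finset.sum_range_succ, ← pow_mul, sq]

theorem trace_eq_zero_iff_of_finrank_eq_three (hq : Fintype.card K = q)
    (h3 : Module.finrank K F = 3) {x : F} :
    Algebra.trace K F x = 0 ↔ x + x ^ q + (x ^ q) ^ q = 0 := by
  rw [← algebraMap_trace_eq_of_finrank_eq_three hq h3,
    map_eq_zero_iff _ (FaithfulSMul.algebraMap_injective K F)]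

theorem algebraMap_trace_eq_three_mul (hq : Fintype.card K = q) (h3 : Module.finrank K F = 3)
    {z : F} (hz : z ^ q = z) : algebraMap K F (Algebra.trace K F z) = 3 * z := by
  rw [algebraMap_trace_eq_of_finrank_eq_three hq h3, hz, hz]
  ring

theorem trace_mul_eq_zero_of_pow_card_eq (hq : Fintype.card K = q) (h3 : Module.finrank K F = 3)
    {a z : F} (ha : a ^ q = a) (hz : Algebra.trace K F z = 0) :
    Algebra.trace K F (a * z) = 0 := by
  rw [trace_eq_zero_iff_of_finrank_eq_three hq h3] at hz ⊢
  rw [mul_pow, mul_pow, ha, ha]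
  linear_combination a * hz

theorem pow_card_mul_eq_self_of_trace_eq_zero (hq : Fintype.card K = q)
    (h3 : Module.finrank K F = 3) {ξ c x : F} (hξ : IsPrimitiveRoot ξ 3) (hξq : ξ ^ q = ξ)
    (hc : c ^ q = ξ * c) (hc0 : c ≠ 0) (hx : Algebra.trace K F x = 0)
    (hxc : Algebra.trace K F (x * c ^ 2) = 0) : (x * c) ^ q = x * c := by
  rw [trace_eq_zero_iff_of_finrank_eq_three hq h3] at hx hxc
  have hξ3 : ξ ^ 3 = 1 := hξ.pow_eq_one
  have hc2 : (c ^ 2) ^ q = ξ ^ 2 * c ^ 2 := by rw [← pow_mul, mul_comm, pow_mul, hc]; ring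
  have htwisted : x + ξ ^ 2 * x ^ q + ξ * (x ^ q) ^ q = 0 := by
    have hξ2 : (ξ ^ 2) ^ q = ξ ^ 2 := by rw [← pow_mul, mul_comm, pow_mul, hξq]
    rw [mul_pow, hc2, mul_pow, mul_pow, hc2, hξ2] at hxc
    refine (mul_eq_zero.mp ?_).resolve_right (pow_ne_zero 2 hc0)
    linear_combination hxc - ξ * (x ^ q) ^ q * c ^ 2 * hξ3
  have hxq : x = ξ * x ^ q := by
    have : (1 - ξ) * (x - ξ * x ^ q) = 0 := by
      linear_combination htwisted - ξ * hx
    exact sub_eq_zero.mp ((mul_eq_zero.mp this).resolve_left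
      (sub_ne_zero.mpr (hξ.ne_one (by norm_num)).symm))
  rw [mul_pow, hc]
  linear_combination (-c) * hxq

end FiniteField

open FiniteField

section WQ

variable {K F : Type} [Field K] [Field F] [Fintype K] [Finite F] [Algebra K F] {q : ℕ}

theorem trace_pow_eq_zero_of_add_mem_WQ (hK : Fintype.card K = q)
    (h3 : Module.finrank K F = 3) {ω : F}
    (hωD : (ω ^ (q ^ 2 + q + 1)) ^ q = ω ^ (q ^ 2 + q + 1)) {u : ZMod (q ^ 2 + q + 1)} {m : ℕ}
    (h : u + (m : ZMod (q ^ 2 + q + 1)) ∈ WQ q K ω) :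
    Algebra.trace K F (ω ^ (2 * (u.val + m))) = 0 := by
  have hval : (u + (m : ZMod (q ^ 2 + q + 1))).val = (u.val + m) % (q ^ 2 + q + 1) := by
    rw [← ZMod.val_natCast, Nat.cast_add, ZMod.natCast_zmod_val]
  have hsplit : ω ^ (2 * (u.val + m)) =
      (ω ^ (q ^ 2 + q + 1)) ^ (2 * ((u.val + m) / (q ^ 2 + q + 1))) *
        ω ^ (2 * (u + (m : ZMod (q ^ 2 + q + 1))).val) := by
    rw [hval, ← pow_mul, ← pow_add]
    conv_lhs => rw [← Nat.div_add_mod (u.val + m) (q ^ 2 + q + 1)]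
    ring
  rw [hsplit]
  exact trace_mul_eq_zero_of_pow_card_eq hK h3 (by rw [← pow_mul, mul_comm, pow_mul, hωD]) h

theorem algebraMap_trace_mul_eq_three_mul_sq (hK : Fintype.card K = q)
    (h3 : Module.finrank K F = 3) (hq3 : q % 3 = 1) {N : ℕ} (hN : q ^ 2 + q + 1 = 3 * N)
    {ω : F} (hω : orderOf ω = q ^ 3 - 1) {u : ZMod (q ^ 2 + q + 1)} (hu : u ∈ WQ q K ω)
    {ℓ : ℕ} (hℓ1 : 1 ≤ ℓ) (hℓ2 : ℓ ≤ 2)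
    (hℓW : u + ((ℓ * N : ℕ) : ZMod (q ^ 2 + q + 1)) ∈ WQ q K ω) :
    algebraMap K F (Algebra.trace K F (ω ^ (2 * u.val + ℓ * N))) * ω ^ (ℓ * N) =
      3 * (ω ^ (u.val + ℓ * N)) ^ 2 := by
  have hq2 : 1 < q := hK ▸ Fintype.one_lt_card
  have hq1 : 1 ≤ q := hq2.le
  have hord : orderOf ω = (q ^ 2 + q + 1) * (q - 1) := by
    rw [hω]; zify [Nat.one_le_pow 3 q hq1, hq1]; ring
  have hord_pos : 0 < orderOf ω := by
    rw [hord]; exact Nat.mul_pos (by positivity) (by omega)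
  have hω0 : ω ≠ 0 := by
    rintro rfl
    exact zero_ne_one ((zero_pow hord_pos.ne').symm.trans (pow_orderOf_eq_one 0))
  set c := ω ^ (ℓ * N)
  set ξ := c ^ (q - 1)
  have hξ : IsPrimitiveRoot ξ 3 := by
    have h := ((IsPrimitiveRoot.orderOf ω).pow hord_pos (a := N * (q - 1)) (b := 3)
      (by rw [hord, hN]; ring)).pow_of_coprime ℓ (by interval_cases ℓ <;> decide)
    convert h using 1
    simp only [ξ, c, ← pow_mul]
    ring
  have hc : c ^ q = ξ * c := by
    conv_lhs => rw [← Nat.sub_add_cancel hq1, pow_succ]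
  have hξq : ξ ^ q = ξ := by rw [← pow_mod_orderOf, ← hξ.eq_orderOf, hq3, pow_one]
  have hωD : (ω ^ (q ^ 2 + q + 1)) ^ q = ω ^ (q ^ 2 + q + 1) := by
    have : (q ^ 2 + q + 1) * q = (q ^ 2 + q + 1) * (q - 1) + (q ^ 2 + q + 1) := by
      zify [hq1]; ring
    rw [← pow_mul, this, pow_add, ← hord, pow_orderOf_eq_one, one_mul]
  have hxc := trace_pow_eq_zero_of_add_mem_WQ hK h3 hωD hℓW
  have hfix : (ω ^ (2 * u.val) * c) ^ q = ω ^ (2 * u.val) * c :=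
    pow_card_mul_eq_self_of_trace_eq_zero hK h3 hξ hξq hc (pow_ne_zero _ hω0) hu
      (by rw [← pow_mul, ← pow_add]; convert hxc using 2; ring)
  rw [pow_add, algebraMap_trace_eq_three_mul hK h3 hfix]
  ring

end WQ

theorem stmt17_general (q N : ℕ) (hq6 : q % 6 = 1) (hN : N = (q ^ 2 + q + 1) / 3)
    (K F : Type) [Field K] [Field F] [Fintype K] [Fintype F]
    [Algebra K F]
    (hK : Fintype.card K = q) (hF : Fintype.card F = q ^ 3)
    (ω : F) (hω : ∀ x : F, x ≠ 0 → ∃ k : ℕ, ω ^ k = x)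
    (u : ZMod (q ^ 2 + q + 1)) (hu : u ∈ WQ q K ω)
    (ℓu : ℕ) (hℓu1 : 1 ≤ ℓu) (hℓu2 : ℓu ≤ 3 - 1)
    (hℓuW : u + ((ℓu * N : ℕ) : ZMod (q ^ 2 + q + 1)) ∈ WQ q K ω)
    (η : MulChar F ℂ) (hη : orderOf η = 2) :
    (q % 12 = 1 →
      η (algebraMap K F (Algebra.trace K F (ω ^ (2 * u.val + ℓu * N))) * ω ^ (ℓu * N))
        = 1) ∧
    (q % 12 = 7 →
      η (algebraMap K F (Algebra.trace K F (ω ^ (2 * u.val + ℓu * N))) * ω ^ (ℓu * N))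
        = -1) := by
  have hF2 : ¬2 ∣ Fintype.card F := fun h => by
    have := Nat.prime_two.dvd_of_dvd_pow (hF ▸ h); omega
  have hF3 : ¬3 ∣ Fintype.card F := fun h => by
    have := Nat.prime_three.dvd_of_dvd_pow (hF ▸ h); omega
  have hD : q ^ 2 + q + 1 = 3 * N := by
    have : (q ^ 2 + q + 1) % 3 = 0 := by simp [Nat.add_mod, Nat.pow_mod, (by omega : q % 3 = 1)]
    omega
  have hω0 := ne_zero_of_forall_exists_pow_eq (ringChar_ne_of_not_dvd_card hF2) hω
  have hg := algebraMap_trace_mul_eq_three_mul_sq hK (finrank_eq_of_card_eq_pow (hK ▸ hF))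
    (by omega) hD (by rw [orderOf_eq_card_sub_one_of_forall_exists_pow_eq hω0 hω, hF]) hu
    hℓu1 hℓu2 hℓuW
  have h3sq : IsSquare (3 : F) ↔ q % 12 = 1 := by
    rw [isSquare_three_iff (ringChar_ne_of_not_dvd_card hF2) (ringChar_ne_of_not_dvd_card hF3),
      hF, Nat.pow_mod]
    obtain h | h : q % 12 = 1 ∨ q % 12 = 7 := by omega
    all_goals simp [h]
  have hη2 : η ^ 2 = 1 := hη ▸ pow_orderOf_eq_one η
  rw [hg, map_mul, MulChar.apply_eq_one_of_isSquare hη2 (IsSquare.sq _)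
    (pow_ne_zero _ (pow_ne_zero _ hω0)).isUnit, mul_one]
  refine ⟨fun h => MulChar.apply_eq_one_of_isSquare hη2 (h3sq.mpr h) ?_,
    fun h => MulChar.apply_eq_neg_one_of_not_isSquare hη (by rw [h3sq]; omega)⟩
  exact_mod_cast isUnit_natCast_of_not_dvd_card (p := 3) hF3

/-- Let `q ≡ 1 (mod 6)` be a prime power, `M = 3`, `N = (q²+q+1)/3`.
For `u ∈ W_Q` with `u mod N ∈ 2⁻¹I₁` and `ℓ_u` as defined, with
`g₃(ω^u) := Tr_{q³/q}(ω^{2u+ℓ_uN})·ω^{ℓ_uN}`, one has `η(g₃(ω^u)) = 1` if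
`q ≡ 1 (mod 12)` and `η(g₃(ω^u)) = -1` if `q ≡ 7 (mod 12)`, where `η` is the
quadratic character of `F_{q³}`. -/
theorem stmt17 (p n q N : ℕ) [Fact p.Prime] (hq : q = p ^ n) (hn : 0 < n)
    (hq6 : q % 6 = 1) (hN : N = (q ^ 2 + q + 1) / 3)
    (K F : Type) [Field K] [Field F] [Fintype K] [Fintype F]
    [Algebra K F] [Algebra (ZMod p) F]
    (hK : Fintype.card K = q) (hF : Fintype.card F = q ^ 3)
    (ω : F) (hω : ∀ x : F, x ≠ 0 → ∃ k : ℕ, ω ^ k = x)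
    (I₁ : Set (ZMod N))
    (hI₁ : I₁ = {i : ZMod N |
      psiSum (canonPsi p F) (cycClass ω N i.val) = -3 + 2 * (q : ℂ)})
    (u : ZMod (q ^ 2 + q + 1)) (hu : u ∈ WQ q K ω)
    (huI : ((u.val : ZMod N)) ∈ (2 : ZMod N)⁻¹ • I₁)
    (ℓu : ℕ) (hℓu1 : 1 ≤ ℓu) (hℓu2 : ℓu ≤ 3 - 1)
    (hℓuW : u + ((ℓu * N : ℕ) : ZMod (q ^ 2 + q + 1)) ∈ WQ q K ω)
    (η : MulChar F ℂ) (hη : orderOf η = 2) :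
    (q % 12 = 1 →
      η (algebraMap K F (Algebra.trace K F (ω ^ (2 * u.val + ℓu * N))) * ω ^ (ℓu * N))
        = 1) ∧
    (q % 12 = 7 →
      η (algebraMap K F (Algebra.trace K F (ω ^ (2 * u.val + ℓu * N))) * ω ^ (ℓu * N))
        = -1) :=
  stmt17_general q N hq6 hN K F hK hF ω hω u hu ℓu hℓu1 hℓu2 hℓuW η hη
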